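/- arXiv:0906.1500 — 2 statements merged into one kernel-verified Lean document; each statement's English description precedes it below -/
import Mathlib

section
/- Let F be a field and R = F[t, t⁻¹] the ring of Laurent polynomials. Let H be a finitely generated R-module on which multiplication by (t − 1) is bijective. Then H is a torsion R-module, i.e. every element of H is annihilated by some nonzero element of R. -/
open LaurentPolynomial

/-- Nakayama's lemma for `(p)` gives an annihilator `r ≡ 1 mod p`, which is nonzero since `p`
is not a unit. -/
theorem Module.exists_ne_zero_forall_smul_eq_zero_of_surjective_smul {R M : Type*} [CommRing R]
    [AddCommGroup M] [Module R M] [Module.Finite R M] {p : R} (hp : ¬IsUnit p)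
    (hsurj : Function.Surjective fun m : M => p • m) :
    ∃ r : R, r ≠ 0 ∧ ∀ m : M, r • m = 0 := by
  have htop : (⊤ : Submodule R M) ≤ Ideal.span {p} • ⊤ := by
    intro m _
    obtain ⟨m', rfl⟩ := hsurj m
    exact Submodule.smul_mem_smul (Ideal.mem_span_singleton_self p) trivial
  obtain ⟨r, hr1, hr⟩ := Submodule.exists_sub_one_mem_and_smul_eq_zero_of_fg_of_le_smul _ ⊤
    Module.Finite.fg_top htop
  refine ⟨r, ?_, fun m => hr m trivial⟩
  rintro rfl
  rw [zero_sub] at hr1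
  exact hp (Ideal.span_singleton_eq_top.mp (Ideal.eq_top_of_isUnit_mem _ hr1 isUnit_one.neg))

theorem LaurentPolynomial.not_isUnit_T_one_sub_one {R : Type*} [CommRing R] [Nontrivial R] :
    ¬IsUnit (T 1 - 1 : R[T;T⁻¹]) := by
  intro hunit
  have h := hunit.map (eval₂ (RingHom.id R) 1)
  rw [map_sub, map_one, eval₂_T, one_zpow, Units.val_one, sub_self] at h
  exact not_isUnit_zero h

/-- Let `R = F[t, t⁻¹]` be the Laurent polynomial ring over a field `F` and let `H` be a
finitely generated `R`-module on which multiplication by `t − 1` is bijective. Then `H`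
is a torsion `R`-module: every element is annihilated by some nonzero element of `R`. -/
theorem torsion_of_t_sub_one_bijective {F : Type*} [Field F] (H : Type*) [AddCommGroup H]
    [Module (LaurentPolynomial F) H] [Module.Finite (LaurentPolynomial F) H]
    (hbij : Function.Bijective
      (fun h : H => ((LaurentPolynomial.T 1 - 1 : LaurentPolynomial F)) • h)) :
    ∀ h : H, ∃ r : LaurentPolynomial F, r ≠ 0 ∧ r • h = 0 := by
  obtain ⟨r, hr0, hr⟩ :=
    Module.exists_ne_zero_forall_smul_eq_zero_of_surjective_smul not_isUnit_T_one_sub_one hbij.2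
  exact fun h => ⟨r, hr0, hr h⟩
end

section
/- Let G be a group, H a normal subgroup of G with quotient Q = G/H, let C be a left ℤ[G]-module and V a right ℤ[G]-module (over ℂ, i.e. V is a ℂ-vector space with a right G-action). Then the map Φ : V ⊗_{ℤ[H]} C → (V ⊗_ℂ ℂ[Q]) ⊗_{ℤ[G]} C defined by Φ(x ⊗ c) = (x ⊗ 1) ⊗ c is a well-defined isomorphism of ℂ[Q]-modules, where Q acts on the left side by g̅ ⋆ (x ⊗ c) = xγ⁻¹ ⊗ γc for any lift γ ∈ G of g̅ ∈ Q, and on the right side by g̅ · (x ⊗ q ⊗ c) = x ⊗ g̅q ⊗ c. -/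
/-!
The inverse of `Φ` sends `(x ⊗ g̅) ⊗ c` to `xγ⁻¹ ⊗ γc` for a lift `γ` of `g̅`. This does not
depend on the lift: replacing `γ` by `γh` with `h ∈ H` changes the tensor by moving
`γhγ⁻¹ ∈ H` across `⊗_{ℤ[H]}`, which is where normality enters. It kills the relations of
`⊗_{ℤ[G]}`, because `(x ⊗ δ̄)·γ ⊗ c` and `x ⊗ δ̄ ⊗ γc` both go to `xδ⁻¹ ⊗ δγc`. The two
composites are the identity on generators, using `(xγ⁻¹ ⊗ 1)·γ = x ⊗ γ̄`.
-/

open scoped TensorProduct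
open MulOpposite

section

variable {G : Type*} [Group G] (H : Subgroup G) [H.Normal]
variable (V : Type*) [AddCommGroup V] [Module ℂ V]
  [DistribMulAction Gᵐᵒᵖ V] [SMulCommClass Gᵐᵒᵖ ℂ V]
variable (C : Type*) [AddCommGroup C] [DistribMulAction G C]

/-- The relations submodule defining `V ⊗_{ℤ[H]} C` as a quotient of `V ⊗_ℤ C`:
spanned by `v·h ⊗ c − v ⊗ h·c` for `h ∈ H`. -/
noncomputable def relSubgroup : Submodule ℂ (V ⊗[ℤ] C) :=
  Submodule.span ℂ
    {z | ∃ (v : V) (h : H) (c : C),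
      z = (op (h : G) • v) ⊗ₜ[ℤ] c - v ⊗ₜ[ℤ] ((h : G) • c)}

/-- The right action of `γ ∈ G` on `V ⊗_ℂ ℂ[G/H]`, by `(v ⊗ q)·γ = v·γ ⊗ q·π(γ)`. -/
noncomputable def rightAct (γ : G) :
    (V ⊗[ℂ] MonoidAlgebra ℂ (G ⧸ H)) →ₗ[ℂ] (V ⊗[ℂ] MonoidAlgebra ℂ (G ⧸ H)) :=
  TensorProduct.map (DistribMulAction.toLinearMap ℂ V (op γ))
    (LinearMap.mulRight ℂ (MonoidAlgebra.of ℂ (G ⧸ H) (QuotientGroup.mk γ)))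

/-- The relations submodule defining `(V ⊗_ℂ ℂ[G/H]) ⊗_{ℤ[G]} C` as a quotient of
`(V ⊗_ℂ ℂ[G/H]) ⊗_ℤ C`: spanned by `w·γ ⊗ c − w ⊗ γ·c` for `γ ∈ G`. -/
noncomputable def relGroup :
    Submodule ℂ ((V ⊗[ℂ] MonoidAlgebra ℂ (G ⧸ H)) ⊗[ℤ] C) :=
  Submodule.span ℂ
    {z | ∃ (w : V ⊗[ℂ] MonoidAlgebra ℂ (G ⧸ H)) (γ : G) (c : C),
      z = (rightAct H V γ w) ⊗ₜ[ℤ] c - w ⊗ₜ[ℤ] (γ • c)}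

theorem TensorProduct.induction_on_tmul_single {k M Q : Type*} [CommSemiring k]
    [AddCommMonoid M] [Module k M] {motive : M ⊗[k] MonoidAlgebra k Q → Prop}
    (x : M ⊗[k] MonoidAlgebra k Q) (zero : motive 0)
    (add : ∀ x y, motive x → motive y → motive (x + y))
    (tmul_single : ∀ (m : M) (q : Q) (r : k), motive (m ⊗ₜ MonoidAlgebra.single q r)) :
    motive x := by
  induction x using TensorProduct.induction_on with
  | zero => exact zero
  | add x y hx hy => exact add x y hx hy
  | tmul m a =>
    induction a using MonoidAlgebra.induction_linear with
    | zero => simpa using zero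
    | add a b ha hb => simpa only [tmul_add] using add _ _ ha hb
    | single q r => exact tmul_single m q r

open TensorProduct

omit [H.Normal] [SMulCommClass Gᵐᵒᵖ ℂ V] in
variable {V C} in
theorem relSubgroup_mk_op_smul_tmul {h : G} (hh : h ∈ H) (v : V) (c : C) :
    Submodule.Quotient.mk (p := relSubgroup H V C) ((op h • v) ⊗ₜ[ℤ] c) =
      Submodule.Quotient.mk (p := relSubgroup H V C) (v ⊗ₜ[ℤ] (h • c)) :=
  (Submodule.Quotient.eq _).2 <| Submodule.subset_span ⟨v, ⟨h, hh⟩, c, rfl⟩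

variable {V C} in
theorem relGroup_mk_rightAct_tmul (w : V ⊗[ℂ] MonoidAlgebra ℂ (G ⧸ H)) (γ : G) (c : C) :
    Submodule.Quotient.mk (p := relGroup H V C) (rightAct H V γ w ⊗ₜ[ℤ] c) =
      Submodule.Quotient.mk (p := relGroup H V C) (w ⊗ₜ[ℤ] (γ • c)) :=
  (Submodule.Quotient.eq _).2 <| Submodule.subset_span ⟨w, γ, c, rfl⟩

variable {V} in
theorem rightAct_tmul (γ : G) (v : V) (x : MonoidAlgebra ℂ (G ⧸ H)) :
    rightAct H V γ (v ⊗ₜ x) = (op γ • v) ⊗ₜ (x * MonoidAlgebra.of ℂ (G ⧸ H) γ) :=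
  rfl

/-- The action `γ ⋆ (x ⊗ c) = xγ⁻¹ ⊗ γc`, before passing to `G/H` and to `⊗_{ℤ[H]}`. -/
noncomputable def diagonalAct (γ : G) : V ⊗[ℤ] C →ₗ[ℂ] V ⊗[ℤ] C :=
  AlgebraTensorModule.map (DistribSMul.toLinearMap ℂ V (op γ⁻¹))
    (DistribSMul.toAddMonoidHom C γ).toIntLinearMap

variable {V C} in
theorem diagonalAct_tmul (γ : G) (v : V) (c : C) :
    diagonalAct V C γ (v ⊗ₜ c) = (op γ⁻¹ • v) ⊗ₜ (γ • c) :=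
  rfl

theorem mkQ_comp_diagonalAct_mul {h : G} (hh : h ∈ H) (γ : G) :
    (relSubgroup H V C).mkQ ∘ₗ diagonalAct V C (γ * h) =
      (relSubgroup H V C).mkQ ∘ₗ diagonalAct V C γ := by
  refine AlgebraTensorModule.ext fun v c => ?_
  -- `vγ⁻¹ ⊗ γhc = (v(γh)⁻¹)·k ⊗ γc` and `v(γh)⁻¹ ⊗ k·γc` with `k = γhγ⁻¹ ∈ H`
  have hk : γ * h * γ⁻¹ ∈ H := Subgroup.Normal.conj_mem ‹_› h hh γ
  have := relSubgroup_mk_op_smul_tmul H hk (op (γ * h)⁻¹ • v) (γ • c)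
  rw [smul_smul, ← op_mul, show (γ * h)⁻¹ * (γ * h * γ⁻¹) = γ⁻¹ by group, smul_smul,
    inv_mul_cancel_right] at this
  exact this.symm

noncomputable def cosetDiagonalAct (q : G ⧸ H) :
    V ⊗[ℤ] C →ₗ[ℂ] (V ⊗[ℤ] C) ⧸ relSubgroup H V C :=
  Quotient.liftOn' q (fun γ => (relSubgroup H V C).mkQ ∘ₗ diagonalAct V C γ)
    fun γ γ' hγ => by
      rw [← mul_inv_cancel_left γ γ']
      exact (mkQ_comp_diagonalAct_mul H V C (QuotientGroup.leftRel_apply.1 hγ) γ).symm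

variable {V C} in
theorem cosetDiagonalAct_mk (γ : G) (x : V ⊗[ℤ] C) :
    cosetDiagonalAct H V C γ x = Submodule.Quotient.mk (diagonalAct V C γ x) :=
  rfl

noncomputable def psiTensor :
    (V ⊗[ℂ] MonoidAlgebra ℂ (G ⧸ H)) ⊗[ℤ] C →ₗ[ℂ] (V ⊗[ℤ] C) ⧸ relSubgroup H V C :=
  AlgebraTensorModule.lift <| TensorProduct.lift <| LinearMap.flip <|
    (MonoidAlgebra.basis (G ⧸ H) ℂ).constr ℂ fun q =>
      AlgebraTensorModule.curry (cosetDiagonalAct H V C q)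

variable {V C} in
theorem psiTensor_tmul_single (γ : G) (v : V) (r : ℂ) (c : C) :
    psiTensor H V C ((v ⊗ₜ MonoidAlgebra.single (γ : G ⧸ H) r) ⊗ₜ c) =
      r • Submodule.Quotient.mk (diagonalAct V C γ (v ⊗ₜ c)) := by
  rw [show MonoidAlgebra.single (γ : G ⧸ H) r = r • MonoidAlgebra.basis (G ⧸ H) ℂ γ by simp]
  simp only [psiTensor, AlgebraTensorModule.lift_apply, lift.tmul, LinearMap.flip_apply,
    map_smul, Module.Basis.constr_basis, LinearMap.smul_apply, AlgebraTensorModule.curry_apply,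
    LinearMap.restrictScalars_apply, curry_apply, cosetDiagonalAct_mk]

variable {V} in
theorem rightAct_tmul_single (γ δ : G) (v : V) (r : ℂ) :
    rightAct H V γ (v ⊗ₜ MonoidAlgebra.single (δ : G ⧸ H) r) =
      (op γ • v) ⊗ₜ MonoidAlgebra.single ((δ * γ : G) : G ⧸ H) r := by
  simp [rightAct_tmul, MonoidAlgebra.of_apply, MonoidAlgebra.single_mul_single]

theorem relGroup_le_ker_psiTensor : relGroup H V C ≤ LinearMap.ker (psiTensor H V C) := by
  refine Submodule.span_le.2 ?_
  rintro _ ⟨w, γ, c, rfl⟩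
  rw [SetLike.mem_coe, LinearMap.mem_ker, map_sub, sub_eq_zero]
  induction w using TensorProduct.induction_on_tmul_single with
  | zero => simp
  | add w w' hw hw' => simp only [map_add, add_tmul, hw, hw']
  | tmul_single v q r =>
    obtain ⟨δ, rfl⟩ := QuotientGroup.mk_surjective q
    rw [rightAct_tmul_single, psiTensor_tmul_single, psiTensor_tmul_single, diagonalAct_tmul,
      diagonalAct_tmul, smul_smul, ← op_mul, mul_inv_rev, mul_inv_cancel_left, mul_smul]

noncomputable def phiTensor : V ⊗[ℤ] C →ₗ[ℂ] (V ⊗[ℂ] MonoidAlgebra ℂ (G ⧸ H)) ⊗[ℤ] C :=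
  AlgebraTensorModule.map ((TensorProduct.mk ℂ V _).flip 1) LinearMap.id

omit [DistribMulAction Gᵐᵒᵖ V] [SMulCommClass Gᵐᵒᵖ ℂ V] [DistribMulAction G C] in
variable {V C} in
theorem phiTensor_tmul (v : V) (c : C) :
    phiTensor H V C (v ⊗ₜ c) = (v ⊗ₜ (1 : MonoidAlgebra ℂ (G ⧸ H))) ⊗ₜ c :=
  rfl

theorem relSubgroup_le_ker_phiTensor :
    relSubgroup H V C ≤ LinearMap.ker ((relGroup H V C).mkQ ∘ₗ phiTensor H V C) := by
  refine Submodule.span_le.2 ?_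
  rintro _ ⟨v, ⟨h, hh⟩, c, rfl⟩
  have hof : MonoidAlgebra.of ℂ (G ⧸ H) h = 1 := by
    rw [(QuotientGroup.eq_one_iff h).2 hh, map_one]
  rw [SetLike.mem_coe, LinearMap.mem_ker, map_sub, sub_eq_zero]
  simpa only [LinearMap.comp_apply, Submodule.mkQ_apply, phiTensor_tmul, rightAct_tmul,
    one_mul, hof] using
    relGroup_mk_rightAct_tmul H (v ⊗ₜ[ℂ] (1 : MonoidAlgebra ℂ (G ⧸ H))) h c

noncomputable def phi :
    (V ⊗[ℤ] C) ⧸ relSubgroup H V C →ₗ[ℂ]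
      ((V ⊗[ℂ] MonoidAlgebra ℂ (G ⧸ H)) ⊗[ℤ] C) ⧸ relGroup H V C :=
  (relSubgroup H V C).liftQ _ (relSubgroup_le_ker_phiTensor H V C)

noncomputable def psi :
    ((V ⊗[ℂ] MonoidAlgebra ℂ (G ⧸ H)) ⊗[ℤ] C) ⧸ relGroup H V C →ₗ[ℂ]
      (V ⊗[ℤ] C) ⧸ relSubgroup H V C :=
  (relGroup H V C).liftQ _ (relGroup_le_ker_psiTensor H V C)

variable {V C} in
theorem phi_mk_tmul (v : V) (c : C) :
    phi H V C (Submodule.Quotient.mk (v ⊗ₜ c)) =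
      Submodule.Quotient.mk ((v ⊗ₜ (1 : MonoidAlgebra ℂ (G ⧸ H))) ⊗ₜ c) :=
  rfl

variable {V C} in
theorem phi_smul_mk_diagonalAct (γ : G) (v : V) (r : ℂ) (c : C) :
    phi H V C (r • Submodule.Quotient.mk (diagonalAct V C γ (v ⊗ₜ c))) =
      Submodule.Quotient.mk ((v ⊗ₜ MonoidAlgebra.single (γ : G ⧸ H) r) ⊗ₜ c) := by
  rw [map_smul, diagonalAct_tmul, phi_mk_tmul, ← relGroup_mk_rightAct_tmul, rightAct_tmul,
    smul_smul, ← op_mul, inv_mul_cancel, op_one, one_smul, one_mul, ← Submodule.Quotient.mk_smul,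
    TensorProduct.smul_tmul', ← TensorProduct.tmul_smul, MonoidAlgebra.of_apply,
    MonoidAlgebra.smul_single, smul_eq_mul, mul_one]

theorem phi_comp_psi : phi H V C ∘ₗ psi H V C = LinearMap.id := by
  refine Submodule.linearMap_qext _ (AlgebraTensorModule.ext fun w c => ?_)
  simp only [LinearMap.comp_apply, Submodule.mkQ_apply, LinearMap.id_apply]
  induction w using TensorProduct.induction_on_tmul_single with
  | zero => simp
  | add w w' hw hw' => simp only [add_tmul, Submodule.Quotient.mk_add, map_add, hw, hw']
  | tmul_single v q r =>
    obtain ⟨γ, rfl⟩ := QuotientGroup.mk_surjective q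
    simp only [psi, Submodule.liftQ_apply, psiTensor_tmul_single, phi_smul_mk_diagonalAct]

theorem psi_comp_phi : psi H V C ∘ₗ phi H V C = LinearMap.id := by
  refine Submodule.linearMap_qext _ (AlgebraTensorModule.ext fun v c => ?_)
  have one_eq : (1 : MonoidAlgebra ℂ (G ⧸ H)) = MonoidAlgebra.single ((1 : G) : G ⧸ H) 1 := rfl
  change psiTensor H V C ((v ⊗ₜ (1 : MonoidAlgebra ℂ (G ⧸ H))) ⊗ₜ c) = _
  rw [one_eq, psiTensor_tmul_single, one_smul, diagonalAct_tmul, inv_one, op_one, one_smul, one_smul]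
  rfl

/-- For a normal subgroup `H ≤ G` with quotient `Q = G/H`, a right `ℤ[G]`-module `V`
over `ℂ` and a left `ℤ[G]`-module `C`, the map `Φ : V ⊗_{ℤ[H]} C → (V ⊗_ℂ ℂ[Q]) ⊗_{ℤ[G]} C`,
`x ⊗ c ↦ (x ⊗ 1) ⊗ c`, is a well-defined `ℂ[Q]`-module isomorphism, where `Q` acts on
the source by `g̅ ⋆ (x ⊗ c) = xγ⁻¹ ⊗ γc` for any lift `γ` of `g̅`, and on the target by
`g̅ · (x ⊗ q ⊗ c) = x ⊗ g̅q ⊗ c`. -/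
theorem tensor_over_subgroup_iso_group_algebra_tensor :
    ∃ Φ : ((V ⊗[ℤ] C) ⧸ relSubgroup H V C) ≃ₗ[ℂ]
        (((V ⊗[ℂ] MonoidAlgebra ℂ (G ⧸ H)) ⊗[ℤ] C) ⧸ relGroup H V C),
      (∀ (v : V) (c : C),
        Φ (Submodule.Quotient.mk (p := relSubgroup H V C) (v ⊗ₜ[ℤ] c)) =
          Submodule.Quotient.mk (p := relGroup H V C)
            ((v ⊗ₜ[ℂ] (1 : MonoidAlgebra ℂ (G ⧸ H))) ⊗ₜ[ℤ] c)) ∧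
      (∀ (γ : G) (v : V) (c : C),
        Φ (Submodule.Quotient.mk (p := relSubgroup H V C)
            ((op γ⁻¹ • v) ⊗ₜ[ℤ] (γ • c))) =
          Submodule.Quotient.mk (p := relGroup H V C)
            ((v ⊗ₜ[ℂ] MonoidAlgebra.of ℂ (G ⧸ H) (QuotientGroup.mk γ)) ⊗ₜ[ℤ] c)) := by
  refine ⟨.ofLinearMap (phi H V C) (psi H V C) (phi_comp_psi H V C) (psi_comp_phi H V C),
    phi_mk_tmul H, fun γ v c => ?_⟩
  have := phi_smul_mk_diagonalAct H γ v 1 c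
  rwa [one_smul, diagonalAct_tmul, ← MonoidAlgebra.of_apply] at this

end
end
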